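/- As the integer g tends to infinity, the quantity (ζ(2g)/π^{2g}) · 2g·(2g+1) · (2g−2)!!/(2g−3)!! is asymptotically equivalent to 4·g^{5/2}/π^{2g−1/2}; that is, the ratio of the two expressions tends to 1. -/

import Mathlib

open Filter

/-- `ζ(s) = ∑_{k ≥ 1} 1/k^s`. -/
noncomputable def zetaVal (s : ℕ) : ℝ := ∑' k : ℕ, 1 / ((k : ℝ) + 1) ^ s


lemma zeta_summable {s : ℕ} (hs : 2 ≤ s) : Summable (fun k : ℕ => 1 / ((k : ℝ) + 1) ^ s) := by
  have := (summable_nat_add_iff 1).2 (Real.summable_one_div_nat_pow.2 hs)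
  refine this.congr fun k => ?_
  push_cast
  ring_nf

lemma zeta_tendsto : Tendsto (fun g : ℕ => zetaVal (2 * g)) atTop (nhds 1) := by
  have C_sum : Summable (fun k : ℕ => 1 / ((k : ℝ) + 2) ^ 2) := by
    have := (summable_nat_add_iff 2).2 (Real.summable_one_div_nat_pow (p := 2) |>.2 (by norm_num))
    refine this.congr fun k => ?_
    push_cast
    ring_nf
  set C : ℝ := ∑' k : ℕ, 1 / ((k : ℝ) + 2) ^ 2 with hC
  have hup : Tendsto (fun g : ℕ => 1 + C * (1/4 : ℝ) ^ (g - 1)) atTop (nhds 1) := by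
    have h4 : Tendsto (fun g : ℕ => (1/4 : ℝ) ^ (g - 1)) atTop (nhds 0) :=
      (tendsto_pow_atTop_nhds_zero_of_lt_one (by norm_num) (by norm_num)).comp
        (tendsto_sub_atTop_nat 1)
    simpa using tendsto_const_nhds.add (tendsto_const_nhds.mul h4)
  refine tendsto_of_tendsto_of_tendsto_of_le_of_le' tendsto_const_nhds hup ?_ ?_
  · filter_upwards [eventually_ge_atTop 1] with g hg
    have hsum := zeta_summable (s := 2 * g) (by omega)
    have h0 := hsum.le_tsum 0 fun i _ => by positivity
    rw [zetaVal]
    simpa using h0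
  · filter_upwards [eventually_ge_atTop 1] with g hg
    have hsum := zeta_summable (s := 2 * g) (by omega)
    rw [zetaVal, hsum.tsum_eq_zero_add]
    have hterm : ∀ k : ℕ, 1 / (((k : ℕ) + 1 : ℝ) + 1) ^ (2 * g)
        ≤ 1 / ((k : ℝ) + 2) ^ 2 * (1/4 : ℝ) ^ (g - 1) := by
      intro k
      have hk2 : (2 : ℝ) ≤ (k : ℝ) + 2 := by linarith [Nat.cast_nonneg (α := ℝ) k]
      have hpos : (0 : ℝ) < (k : ℝ) + 2 := by positivity
      have hsplit : ((k : ℝ) + 2) ^ (2 * g) = ((k : ℝ) + 2) ^ 2 * ((k : ℝ) + 2) ^ (2 * g - 2) := by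
        rw [← pow_add]; congr 1; omega
      have hge : (4 : ℝ) ^ (g - 1) ≤ ((k : ℝ) + 2) ^ (2 * g - 2) := by
        calc (4 : ℝ) ^ (g - 1) = ((2 : ℝ) ^ 2) ^ (g - 1) := by norm_num
          _ = (2 : ℝ) ^ (2 * g - 2) := by rw [← pow_mul]; congr 1; omega
          _ ≤ ((k : ℝ) + 2) ^ (2 * g - 2) := pow_le_pow_left₀ (by norm_num) hk2 _
      have : ((k : ℝ) + 2) ^ 2 * (4 : ℝ) ^ (g - 1) ≤ ((k : ℝ) + 2) ^ (2 * g) := by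
        rw [hsplit]
        exact mul_le_mul_of_nonneg_left hge (by positivity)
      have h1 : 1 / ((k : ℝ) + 2) ^ (2 * g) ≤ 1 / (((k : ℝ) + 2) ^ 2 * (4 : ℝ) ^ (g - 1)) :=
        one_div_le_one_div_of_le (by positivity) this
      calc 1 / (((k : ℕ) + 1 : ℝ) + 1) ^ (2 * g) = 1 / ((k : ℝ) + 2) ^ (2 * g) := by ring_nf
        _ ≤ 1 / (((k : ℝ) + 2) ^ 2 * (4 : ℝ) ^ (g - 1)) := h1
        _ = 1 / ((k : ℝ) + 2) ^ 2 * (1/4 : ℝ) ^ (g - 1) := by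
            rw [div_pow, one_pow, div_mul_div_comm, one_mul]
    have htail : (∑' k : ℕ, 1 / (((k : ℕ) + 1 : ℝ) + 1) ^ (2 * g))
        ≤ C * (1/4 : ℝ) ^ (g - 1) := by
      have hsum' : Summable (fun k : ℕ => 1 / (((k : ℕ) + 1 : ℝ) + 1) ^ (2 * g)) := by
        have := (summable_nat_add_iff 1).2 hsum
        exact this.congr fun k => by push_cast; ring_nf
      have hsumC : Summable (fun k : ℕ => 1 / ((k : ℝ) + 2) ^ 2 * (1/4 : ℝ) ^ (g - 1)) :=
        C_sum.mul_right _
      calc (∑' k : ℕ, 1 / (((k : ℕ) + 1 : ℝ) + 1) ^ (2 * g))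
          ≤ ∑' k : ℕ, 1 / ((k : ℝ) + 2) ^ 2 * (1/4 : ℝ) ^ (g - 1) :=
            Summable.tsum_le_tsum hterm hsum' hsumC
        _ = C * (1/4 : ℝ) ^ (g - 1) := tsum_mul_right
    push_cast
    calc (1 : ℝ) / (0 + 1) ^ (2 * g) + ∑' k : ℕ, 1 / ((k : ℝ) + 1 + 1) ^ (2 * g)
        = 1 + ∑' k : ℕ, 1 / ((k : ℝ) + 1 + 1) ^ (2 * g) := by norm_num
      _ ≤ 1 + C * (1/4 : ℝ) ^ (g - 1) := add_le_add_right htail 1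


lemma stirling_pos {n : ℕ} (hn : 1 ≤ n) : 0 < Stirling.stirlingSeq n := by
  rw [Stirling.stirlingSeq]
  have h1 : (0:ℝ) < Real.sqrt (2 * n) := Real.sqrt_pos.2 (by positivity)
  have h2 : (0:ℝ) < ((n:ℝ) / Real.exp 1) ^ n := pow_pos (by positivity) n
  have h3 : (0:ℝ) < (n.factorial : ℝ) := by positivity
  positivity

lemma dfac_ratio {n : ℕ} (hn : 1 ≤ n) :
    ((2 * n).doubleFactorial : ℝ) / ((2 * n - 1).doubleFactorial : ℝ)
      = Stirling.stirlingSeq n ^ 2 * Real.sqrt n / Stirling.stirlingSeq (2 * n) := by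
  have hn0 : (0:ℝ) < n := by exact_mod_cast hn
  have he : (0:ℝ) < Real.exp 1 := Real.exp_pos 1
  have hA : (0:ℝ) < Real.sqrt (2 * n) * ((n:ℝ) / Real.exp 1) ^ n :=
    mul_pos (Real.sqrt_pos.2 (by positivity)) (pow_pos (by positivity) n)
  have hA2 : (0:ℝ) < Real.sqrt (2 * (2 * n : ℕ)) * (((2 * n : ℕ):ℝ) / Real.exp 1) ^ (2 * n) :=
    mul_pos (Real.sqrt_pos.2 (by push_cast; positivity)) (pow_pos (by push_cast; positivity) _)
  have hfact : (n.factorial : ℝ) = Stirling.stirlingSeq n * (Real.sqrt (2 * n) * ((n:ℝ) / Real.exp 1) ^ n) := by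
    rw [Stirling.stirlingSeq, div_mul_cancel₀ _ (ne_of_gt hA)]
  have hfact2 : ((2 * n).factorial : ℝ)
      = Stirling.stirlingSeq (2 * n)
        * (Real.sqrt (2 * (2 * n : ℕ)) * (((2 * n : ℕ):ℝ) / Real.exp 1) ^ (2 * n)) := by
    rw [Stirling.stirlingSeq, div_mul_cancel₀ _ (ne_of_gt hA2)]
  have key : ((2 * n).doubleFactorial : ℝ) / ((2 * n - 1).doubleFactorial : ℝ)
      = ((2:ℝ) ^ n * n.factorial) ^ 2 / ((2 * n).factorial : ℝ) := by
    have h1 : ((2 * n).factorial : ℝ) = ((2 * n).doubleFactorial : ℝ) * ((2 * n - 1).doubleFactorial : ℝ) := by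
      have h := Nat.factorial_eq_mul_doubleFactorial (2 * n - 1)
      rw [show 2 * n - 1 + 1 = 2 * n from by omega] at h
      exact_mod_cast h
    have h2 : ((2 * n).doubleFactorial : ℝ) = 2 ^ n * n.factorial := by
      exact_mod_cast Nat.doubleFactorial_two_mul n
    have hd : ((2 * n - 1).doubleFactorial : ℝ) ≠ 0 := by positivity
    have hd2 : (2:ℝ) ^ n * (n.factorial : ℝ) ≠ 0 := by positivity
    rw [h1, h2, sq, mul_div_assoc, mul_div_mul_left _ _ hd2, mul_div_assoc]
  rw [key, hfact, hfact2]
  have e1 : Real.sqrt (2 * (2 * n : ℕ)) = 2 * Real.sqrt n := by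
    push_cast
    rw [show 2 * (2 * (n:ℝ)) = 4 * n by ring, Real.sqrt_mul (by norm_num),
      show Real.sqrt 4 = 2 by rw [show (4:ℝ) = 2 ^ 2 by norm_num, Real.sqrt_sq (by norm_num)]]
  have e2 : (((2 * n : ℕ):ℝ) / Real.exp 1) ^ (2 * n) = (2:ℝ) ^ (2 * n) * ((n:ℝ) / Real.exp 1) ^ (2 * n) := by
    push_cast
    rw [show 2 * (n:ℝ) / Real.exp 1 = 2 * ((n:ℝ) / Real.exp 1) by ring, mul_pow]
  have e3 : Real.sqrt (2 * (n:ℝ)) ^ 2 = 2 * n := Real.sq_sqrt (by positivity)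
  have e4 : (((n:ℝ) / Real.exp 1) ^ n) ^ 2 = ((n:ℝ) / Real.exp 1) ^ (2 * n) := by
    rw [← pow_mul, mul_comm]
  have e5 : (2:ℝ) ^ (2 * n) = ((2:ℝ) ^ n) ^ 2 := by rw [← pow_mul, mul_comm]
  have hsn : Real.sqrt (n:ℝ) ≠ 0 := Real.sqrt_ne_zero'.2 hn0
  have hs2n : Stirling.stirlingSeq (2 * n) ≠ 0 := ne_of_gt (stirling_pos (by omega))
  have hP : ((n:ℝ) / Real.exp 1) ^ (2 * n) ≠ 0 := by positivity
  have hmul : Real.sqrt (n:ℝ) * Real.sqrt (n:ℝ) = n := Real.mul_self_sqrt (le_of_lt hn0)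
  rw [e1, e2, mul_pow, mul_pow, mul_pow, e3, e4, e5,
    show (2:ℝ) * (n:ℝ) = 2 * (Real.sqrt n * Real.sqrt n) by rw [hmul]]
  field_simp

/-- As `g → ∞`, the quantity `(ζ(2g)/π^{2g}) · 2g·(2g+1) · (2g−2)!!/(2g−3)!!` is
asymptotically equivalent to `4·g^{5/2}/π^{2g−1/2}`: the ratio tends to `1`. -/
theorem hyperelliptic_one_cylinder_proportion_asymptotics_even :
    Tendsto (fun g : ℕ =>
        ((zetaVal (2 * g) / Real.pi ^ (2 * g)) * ((2 * g : ℝ) * (2 * g + 1)) *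
            ((Nat.doubleFactorial (2 * g - 2) : ℝ) /
              (Nat.doubleFactorial (2 * g - 3) : ℝ))) /
          (4 * (g : ℝ) ^ ((5 : ℝ) / 2) / Real.pi ^ (2 * (g : ℝ) - 1 / 2)))
      atTop (nhds 1) := by
  have hπ : (0:ℝ) < Real.pi := Real.pi_pos
  -- limit of the four-factor product
  have hzeta : Tendsto (fun g : ℕ => zetaVal (2 * g)) atTop (nhds 1) := zeta_tendsto
  have hA : Tendsto (fun g : ℕ => (2 * g : ℝ) * (2 * g + 1) / (4 * (g:ℝ) ^ 2)) atTop (nhds 1) := by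
    have h : Tendsto (fun g : ℕ => 1 + 1 / (2 * (g:ℝ))) atTop (nhds 1) := by
      have h2 : Tendsto (fun g : ℕ => 1 / (2 * (g:ℝ))) atTop (nhds 0) :=
        (tendsto_const_div_atTop_nhds_zero_nat (1/2 : ℝ)).congr fun g => by ring
      simpa using tendsto_const_nhds.add h2
    refine h.congr' ?_
    filter_upwards [eventually_ge_atTop 1] with g hg
    have hg0 : (0:ℝ) < (g:ℝ) := by exact_mod_cast hg
    field_simp
    ring
  have h2sub : Tendsto (fun g : ℕ => g - 1) atTop atTop := tendsto_sub_atTop_nat 1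
  have hdouble : Tendsto (fun g : ℕ => 2 * (g - 1)) atTop atTop :=
    (tendsto_atTop_atTop.2 fun b => ⟨b, fun a ha => le_trans ha (Nat.le_mul_of_pos_left a two_pos)⟩).comp h2sub
  have hB : Tendsto (fun g : ℕ =>
      Stirling.stirlingSeq (g - 1) ^ 2 / (Stirling.stirlingSeq (2 * (g - 1)) * Real.sqrt Real.pi))
      atTop (nhds 1) := by
    have hs1 : Tendsto (fun g : ℕ => Stirling.stirlingSeq (g - 1) ^ 2) atTop
        (nhds (Real.sqrt Real.pi ^ 2)) :=
      (Stirling.tendsto_stirlingSeq_sqrt_pi.comp h2sub).pow 2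
    have hs2 : Tendsto (fun g : ℕ => Stirling.stirlingSeq (2 * (g - 1)) * Real.sqrt Real.pi) atTop
        (nhds (Real.sqrt Real.pi * Real.sqrt Real.pi)) :=
      (Stirling.tendsto_stirlingSeq_sqrt_pi.comp hdouble).mul tendsto_const_nhds
    have hne : Real.sqrt Real.pi * Real.sqrt Real.pi ≠ 0 := by
      rw [Real.mul_self_sqrt hπ.le]; exact hπ.ne'
    have := hs1.div hs2 hne
    rw [show Real.sqrt Real.pi ^ 2 / (Real.sqrt Real.pi * Real.sqrt Real.pi) = 1 by rw [sq, div_self hne]] at this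
    exact this
  have hC : Tendsto (fun g : ℕ => Real.sqrt ((g:ℝ) - 1) / Real.sqrt (g:ℝ)) atTop (nhds 1) := by
    have h1 : Tendsto (fun g : ℕ => 1 - 1 / (g:ℝ)) atTop (nhds 1) := by
      simpa using (tendsto_const_nhds : Tendsto (fun _ : ℕ => (1:ℝ)) atTop (nhds 1)).sub tendsto_one_div_atTop_nhds_zero_nat
    have h2 : Tendsto (fun g : ℕ => Real.sqrt (1 - 1 / (g:ℝ))) atTop (nhds 1) := by
      have := (Real.continuous_sqrt.tendsto 1).comp h1
      simpa [Function.comp_def] using this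
    refine h2.congr' ?_
    filter_upwards [eventually_ge_atTop 1] with g hg
    have hg0 : (0:ℝ) < (g:ℝ) := by exact_mod_cast hg
    have hge : (0:ℝ) ≤ (g:ℝ) - 1 := by
      have : (1:ℝ) ≤ (g:ℝ) := by exact_mod_cast hg
      linarith
    rw [show 1 - 1 / (g:ℝ) = ((g:ℝ) - 1) / g by field_simp, Real.sqrt_div hge]
  have hprod : Tendsto (fun g : ℕ =>
      zetaVal (2 * g) * ((2 * g : ℝ) * (2 * g + 1) / (4 * (g:ℝ) ^ 2))
        * (Stirling.stirlingSeq (g - 1) ^ 2 / (Stirling.stirlingSeq (2 * (g - 1)) * Real.sqrt Real.pi))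
        * (Real.sqrt ((g:ℝ) - 1) / Real.sqrt (g:ℝ))) atTop (nhds 1) := by
    have := ((hzeta.mul hA).mul hB).mul hC
    simpa using this
  refine hprod.congr' ?_
  filter_upwards [eventually_ge_atTop 2] with g hg
  have hg0 : (0:ℝ) < (g:ℝ) := by exact_mod_cast Nat.lt_of_lt_of_le two_pos hg
  have hg1 : 1 ≤ g - 1 := by omega
  have hd1 : 2 * g - 2 = 2 * (g - 1) := by omega
  have hd2 : 2 * g - 3 = 2 * (g - 1) - 1 := by omega
  have hcast : ((g - 1 : ℕ) : ℝ) = (g:ℝ) - 1 := by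
    push_cast [Nat.cast_sub (show 1 ≤ g by omega)]
    ring
  have hrpow1 : Real.pi ^ (2 * (g:ℝ) - 1/2) = Real.pi ^ (2 * g) / Real.sqrt Real.pi := by
    rw [show 2 * (g:ℝ) - 1/2 = ((2 * g : ℕ):ℝ) - (1/2:ℝ) by push_cast; ring,
      Real.rpow_sub hπ, Real.rpow_natCast, Real.sqrt_eq_rpow]
  have hrpow2 : (g:ℝ) ^ ((5:ℝ)/2) = (g:ℝ) ^ (2:ℕ) * Real.sqrt (g:ℝ) := by
    rw [show (5:ℝ)/2 = ((2:ℕ):ℝ) + 1/2 by norm_num, Real.rpow_add hg0, Real.rpow_natCast,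
      Real.sqrt_eq_rpow]
  rw [hd1, hd2, dfac_ratio hg1, hcast, hrpow1, hrpow2]
  have hne1 : Real.pi ^ (2 * g) ≠ 0 := by positivity
  have hne2 : Real.sqrt Real.pi ≠ 0 := Real.sqrt_ne_zero'.2 hπ
  have hne3 : Real.sqrt (g:ℝ) ≠ 0 := Real.sqrt_ne_zero'.2 hg0
  have hne4 : Stirling.stirlingSeq (2 * (g - 1)) ≠ 0 := ne_of_gt (stirling_pos (by omega))
  have hne5 : (g:ℝ) ≠ 0 := hg0.ne'
  field_simp
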